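/- arXiv:2208.05386 — 2 statements merged into one kernel-verified Lean document; each statement's English description precedes it below -/
import Mathlib

section
/- Let G^* be a complete r-partite graph on n vertices with parts X_1,...,X_r where x_1 = (1 + η(r−1))n/r and x_i = (1−η)n/r for 2 ≤ i ≤ r (with 0 < η < 1, r ≥ 3, and all x_i positive integers). Then N(C_4, G^*)/C(n,4) = OPT_r − 6η^2·(2r^3−10r^2+17r−9)/r^3 + 12η^3·(r^3−6r^2+11r−6)/r^3 − 3η^4·(r^3−8r^2+16r−9)/r^3 + o(1) as n → ∞, where OPT_r = 3(r−1)(r^2−3r+3)/r^3. -/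
/-- The 4-cycle `C₄` as a simple graph on `Fin 4`. -/
def cyc4 : SimpleGraph (Fin 4) := SimpleGraph.fromRel (fun i j => j = i + 1)

/-- `numCopies H G` is the number of subgraphs of `G` isomorphic to `H`:
the number of injective graph homomorphisms `H → G` divided by the number of
injective graph homomorphisms `H → H` (the automorphisms of `H`). -/
noncomputable def numCopies {α β : Type*} (H : SimpleGraph α) (G : SimpleGraph β) : ℕ :=
  Nat.card {f : H →g G // Function.Injective f} /
    Nat.card {f : H →g H // Function.Injective f}

/-- The complete multipartite graph with parts of sizes `x 0, …, x (r-1)`. -/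
def multipartite {r : ℕ} (x : Fin r → ℕ) : SimpleGraph (Σ i, Fin (x i)) :=
  SimpleGraph.completeMultipartiteGraph (fun i => Fin (x i))

set_option maxHeartbeats 4000000

open Finset

def homEquiv {α β : Type*} (H : SimpleGraph α) (G : SimpleGraph β) :
    {f : H →g G // Function.Injective f} ≃
    {f : α → β // (∀ a b, H.Adj a b → G.Adj (f a) (f b)) ∧ Function.Injective f} where
  toFun f := ⟨f.1, fun _ _ h => f.1.map_rel h, f.2⟩
  invFun f := ⟨⟨f.1, fun h => f.2.1 _ _ h⟩, f.2.2⟩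
  left_inv _ := rfl
  right_inv _ := rfl





instance : DecidableRel cyc4.Adj := fun a b => by
  unfold cyc4 SimpleGraph.fromRel; exact instDecidableAnd

lemma multipartite_adj {r : ℕ} (x : Fin r → ℕ) (v w : Σ i, Fin (x i)) :
    (multipartite x).Adj v w ↔ v.1 ≠ w.1 := Iff.rfl

variable {r : ℕ} (x : Fin r → ℕ)

/-- tuple z = (v0, v1, v2, v3) -/
def Cond4 (z : (Σ i, Fin (x i)) × (Σ i, Fin (x i)) × (Σ i, Fin (x i)) × (Σ i, Fin (x i))) : Prop :=
  z.1 ≠ z.2.2.1 ∧ ((z.2.1.1 ≠ z.1.1 ∧ z.2.1.1 ≠ z.2.2.1.1) ∧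
    (z.2.2.2.1 ≠ z.1.1 ∧ z.2.2.2.1 ≠ z.2.2.1.1) ∧ z.2.1 ≠ z.2.2.2)

def mkHom (v0 v1 v2 v3 : Σ i, Fin (x i)) (h10 : v1.1 ≠ v0.1) (h12 : v1.1 ≠ v2.1)
    (h30 : v3.1 ≠ v0.1) (h32 : v3.1 ≠ v2.1) : cyc4 →g multipartite x where
  toFun := ![v0, v1, v2, v3]
  map_rel' := by
    intro a b hab
    fin_cases a <;> fin_cases b <;>
      first
      | exact absurd hab (by decide)
      | (rw [multipartite_adj]; simp only [Matrix.cons_val_zero, Matrix.cons_val_one,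
          Matrix.head_cons, Matrix.cons_val_two, Matrix.tail_cons, Matrix.cons_val_three]
         first | exact h10.symm | exact h10 | exact h12 | exact h12.symm
               | exact h30 | exact h30.symm | exact h32 | exact h32.symm)

lemma mkHom_inj (v0 v1 v2 v3 : Σ i, Fin (x i)) (h10 : v1.1 ≠ v0.1) (h12 : v1.1 ≠ v2.1)
    (h30 : v3.1 ≠ v0.1) (h32 : v3.1 ≠ v2.1) (h02 : v0 ≠ v2) (h13 : v1 ≠ v3) :
    Function.Injective (mkHom x v0 v1 v2 v3 h10 h12 h30 h32) := by
  have n01 : v0 ≠ v1 := fun h => h10 (by rw [h])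
  have n12 : v1 ≠ v2 := fun h => h12 (by rw [h])
  have n23 : v2 ≠ v3 := fun h => h32 (by rw [h])
  have n03 : v0 ≠ v3 := fun h => h30 (by rw [h])
  intro a b hab
  have hab' : (![v0, v1, v2, v3] : Fin 4 → _) a = ![v0, v1, v2, v3] b := hab
  fin_cases a <;> fin_cases b <;> simp_all <;>
    first | rfl | exact absurd hab' (by tauto) | exact absurd hab'.symm (by tauto)

def tupEquiv : {f : cyc4 →g multipartite x // Function.Injective f} ≃ {z // Cond4 x z} where
  toFun f := ⟨(f.1 0, f.1 1, f.1 2, f.1 3), by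
    have h01 : (multipartite x).Adj (f.1 0) (f.1 1) := f.1.map_rel (by decide)
    have h12 : (multipartite x).Adj (f.1 1) (f.1 2) := f.1.map_rel (by decide)
    have h23 : (multipartite x).Adj (f.1 2) (f.1 3) := f.1.map_rel (by decide)
    have h30 : (multipartite x).Adj (f.1 3) (f.1 0) := f.1.map_rel (by decide)
    rw [multipartite_adj] at h01 h12 h23 h30
    refine ⟨f.2.ne (by decide), ⟨h01.symm, h12⟩, ⟨h30, h23.symm⟩, f.2.ne (by decide)⟩⟩
  invFun z := ⟨mkHom x z.1.1 z.1.2.1 z.1.2.2.1 z.1.2.2.2 z.2.2.1.1 z.2.2.1.2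
      z.2.2.2.1.1 z.2.2.2.1.2,
    mkHom_inj x _ _ _ _ _ _ _ _ z.2.1 z.2.2.2.2⟩
  left_inv f := by
    apply Subtype.ext; apply DFunLike.ext; intro i
    fin_cases i <;> rfl
  right_inv z := rfl

lemma card_aut : Nat.card {f : cyc4 →g cyc4 // Function.Injective f} = 8 := by
  rw [Nat.card_congr (homEquiv cyc4 cyc4), Nat.card_eq_fintype_card]
  decide



def Mf (a c : Fin r) : ℕ := ∑ i, if i ≠ a ∧ i ≠ c then x i else 0
def wf (a c : Fin r) : ℕ := x a * x c - (if a = c then x a else 0)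
def Ff (a c : Fin r) : ℕ := Mf x a c * Mf x a c - Mf x a c

lemma card_allowed (a c : Fin r) :
    (univ.filter (fun v : Σ i, Fin (x i) => v.1 ≠ a ∧ v.1 ≠ c)).card = Mf x a c := by
  rw [card_filter, ← Finset.univ_sigma_univ, Finset.sum_sigma]
  refine Finset.sum_congr rfl fun i _ => ?_
  by_cases h : i ≠ a ∧ i ≠ c <;> simp [Mf, h]

lemma card_goodQ (a c : Fin r) :
    (univ.filter (fun Q : (Σ i, Fin (x i)) × (Σ i, Fin (x i)) =>
      (Q.1.1 ≠ a ∧ Q.1.1 ≠ c) ∧ (Q.2.1 ≠ a ∧ Q.2.1 ≠ c) ∧ Q.1 ≠ Q.2)).card = Ff x a c := by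
  have he : (univ.filter (fun Q : (Σ i, Fin (x i)) × (Σ i, Fin (x i)) =>
      (Q.1.1 ≠ a ∧ Q.1.1 ≠ c) ∧ (Q.2.1 ≠ a ∧ Q.2.1 ≠ c) ∧ Q.1 ≠ Q.2))
      = (univ.filter (fun v : Σ i, Fin (x i) => v.1 ≠ a ∧ v.1 ≠ c)).offDiag := by
    ext ⟨u, v⟩
    simp only [Finset.mem_offDiag, Finset.mem_filter, Finset.mem_univ, true_and]
  rw [he, Finset.offDiag_card, card_allowed]
  rfl

lemma pair_sum (F : Fin r → Fin r → ℕ) :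
    (∑ u : Σ i, Fin (x i), ∑ v : Σ i, Fin (x i), if u ≠ v then F u.1 v.1 else 0)
      = ∑ a, ∑ c, wf x a c * F a c := by
  rw [← Finset.univ_sigma_univ, Finset.sum_sigma]
  refine Finset.sum_congr rfl fun a _ => ?_
  have inner : ∀ p : Fin (x a),
      (∑ v ∈ (univ : Finset (Fin r)).sigma fun _ => univ, if (⟨a, p⟩ : Σ i, Fin (x i)) ≠ v then F (⟨a, p⟩ : Σ i, Fin (x i)).1 v.1 else 0)
        = ∑ c, if a = c then (x a - 1) * F a a else x c * F a c := by
    intro p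
    rw [Finset.sum_sigma]
    refine Finset.sum_congr rfl fun c _ => ?_
    by_cases hac : a = c
    · subst hac
      rw [if_pos rfl]
      have step : ∀ q : Fin (x a),
          (if (⟨a, p⟩ : Σ i, Fin (x i)) ≠ ⟨a, q⟩ then F a a else 0)
            = if p = q then 0 else F a a := by
        intro q
        by_cases h : p = q
        · subst h; simp
        · rw [if_pos (by simp [h]), if_neg h]
      rw [Finset.sum_congr rfl fun q _ => step q]
      rw [← Finset.add_sum_erase _ _ (Finset.mem_univ p), if_pos rfl, zero_add]
      rw [Finset.sum_congr rfl (fun q hq => if_neg (Finset.ne_of_mem_erase hq).symm),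
        Finset.sum_const, Finset.card_erase_of_mem (Finset.mem_univ p), Finset.card_univ,
        Fintype.card_fin, smul_eq_mul]
    · rw [if_neg hac]
      have step : ∀ q : Fin (x c),
          (if (⟨a, p⟩ : Σ i, Fin (x i)) ≠ ⟨c, q⟩ then F a c else 0) = F a c := by
        intro q
        exact if_pos (fun h => hac (congrArg Sigma.fst h))
      rw [Finset.sum_congr rfl fun q _ => step q, Finset.sum_const, Finset.card_univ,
        Fintype.card_fin, smul_eq_mul]
  rw [Finset.sum_congr rfl fun p _ => inner p, Finset.sum_const, Finset.card_univ,
    Fintype.card_fin, smul_eq_mul, Finset.mul_sum]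
  refine Finset.sum_congr rfl fun c _ => ?_
  by_cases hac : a = c
  · subst hac
    rw [if_pos rfl, wf, if_pos rfl, ← mul_assoc, Nat.mul_sub_one]
  · rw [if_neg hac, wf, if_neg hac, Nat.sub_zero, mul_assoc]


instance : DecidablePred (Cond4 x) := fun z => by unfold Cond4; exact instDecidableAnd

lemma count_cond :
    (univ.filter (fun z => Cond4 x z)).card = ∑ a, ∑ c, wf x a c * Ff x a c := by
  classical
  have hC : ∀ v0 v2 : Σ i, Fin (x i),
      (∑ v1 : Σ i, Fin (x i), ∑ v3 : Σ i, Fin (x i),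
          (if Cond4 x (v0, v1, v2, v3) then 1 else 0))
        = if v0 ≠ v2 then Ff x v0.1 v2.1 else 0 := by
    intro v0 v2
    rw [← Fintype.sum_prod_type
      (f := fun Q : (Σ i, Fin (x i)) × (Σ i, Fin (x i)) =>
        if Cond4 x (v0, Q.1, v2, Q.2) then 1 else 0)]
    by_cases h02 : v0 = v2
    · rw [if_neg (not_not_intro h02)]
      exact Finset.sum_eq_zero fun Q _ => if_neg (fun hc => hc.1 h02)
    · rw [if_pos h02, ← card_goodQ x v0.1 v2.1, card_filter]
      exact Finset.sum_congr rfl fun Q _ =>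
        if_congr ⟨fun h => h.2, fun h => ⟨h02, h⟩⟩ rfl rfl
  calc (univ.filter (fun z => Cond4 x z)).card
      = ∑ v0 : Σ i, Fin (x i), ∑ v1 : Σ i, Fin (x i), ∑ v2 : Σ i, Fin (x i),
          ∑ v3 : Σ i, Fin (x i), (if Cond4 x (v0, v1, v2, v3) then 1 else 0) := by
        rw [card_filter, Fintype.sum_prod_type]
        refine Finset.sum_congr rfl fun v0 _ => ?_
        rw [Fintype.sum_prod_type]
        refine Finset.sum_congr rfl fun v1 _ => ?_
        rw [Fintype.sum_prod_type]
    _ = ∑ v0 : Σ i, Fin (x i), ∑ v2 : Σ i, Fin (x i),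
          (if v0 ≠ v2 then Ff x v0.1 v2.1 else 0) := by
        refine Finset.sum_congr rfl fun v0 _ => ?_
        rw [Finset.sum_comm]
        exact Finset.sum_congr rfl fun v2 _ => hC v0 v2
    _ = ∑ a, ∑ c, wf x a c * Ff x a c := pair_sum x (Ff x)



lemma Mf_eq_sum_sdiff (a c : Fin r) : Mf x a c = ∑ i ∈ univ \ {a, c}, x i := by
  rw [Mf, ← Finset.sum_filter]
  congr 1
  ext i
  simp [not_or, and_comm]

section twoval

variable [NeZero r] (A B : ℕ)

lemma sum_notzero {s : Finset (Fin r)} (h0 : (0 : Fin r) ∉ s)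
    (hxi : ∀ i : Fin r, i ≠ 0 → x i = B) : ∑ i ∈ s, x i = s.card * B := by
  rw [Finset.sum_congr rfl (fun i hi => hxi i (fun h => h0 (h ▸ hi))), sum_const, smul_eq_mul]

lemma sum_withzero {s : Finset (Fin r)} (h0 : (0 : Fin r) ∈ s)
    (hx0 : x 0 = A) (hxi : ∀ i : Fin r, i ≠ 0 → x i = B) :
    ∑ i ∈ s, x i = A + (s.card - 1) * B := by
  rw [← Finset.add_sum_erase _ _ h0, hx0,
    sum_notzero x B (Finset.notMem_erase _ _) hxi, Finset.card_erase_of_mem h0]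

variable (hr : 3 ≤ r) (hx0 : x 0 = A) (hxi : ∀ i : Fin r, i ≠ 0 → x i = B)
include hr hx0 hxi

omit hr hx0 in
lemma Mf00 : Mf x 0 0 = (r - 1) * B := by
  have hcard : (univ \ ({0, 0} : Finset (Fin r))).card = r - 1 := by
    rw [Finset.card_sdiff_of_subset (subset_univ _), card_univ, Fintype.card_fin]
    simp
  rw [Mf_eq_sum_sdiff, sum_notzero x B (by simp) hxi, hcard]

omit hr hx0 in
lemma Mf0c {c : Fin r} (hc : c ≠ 0) : Mf x 0 c = (r - 2) * B := by
  have hcard : (univ \ ({0, c} : Finset (Fin r))).card = r - 2 := by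
    rw [Finset.card_sdiff_of_subset (subset_univ _), card_univ, Fintype.card_fin,
      Finset.card_pair (Ne.symm hc)]
  rw [Mf_eq_sum_sdiff, sum_notzero x B (by simp) hxi, hcard]

omit hr hx0 in
lemma Mfc0 {c : Fin r} (hc : c ≠ 0) : Mf x c 0 = (r - 2) * B := by
  have hcard : (univ \ ({c, 0} : Finset (Fin r))).card = r - 2 := by
    rw [Finset.card_sdiff_of_subset (subset_univ _), card_univ, Fintype.card_fin,
      Finset.card_pair hc]
  rw [Mf_eq_sum_sdiff, sum_notzero x B (by simp [hc]) hxi, hcard]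

lemma Mfaa {a : Fin r} (ha : a ≠ 0) : Mf x a a = A + (r - 2) * B := by
  have hcard : (univ \ ({a, a} : Finset (Fin r))).card = r - 1 := by
    rw [Finset.card_sdiff_of_subset (subset_univ _), card_univ, Fintype.card_fin]
    simp
  have h2 : r - 1 - 1 = r - 2 := by omega
  rw [Mf_eq_sum_sdiff, sum_withzero x A B (by simp [Ne.symm ha]) hx0 hxi, hcard, h2]

lemma Mfac {a c : Fin r} (ha : a ≠ 0) (hc : c ≠ 0) (hac : a ≠ c) :
    Mf x a c = A + (r - 3) * B := by
  have hcard : (univ \ ({a, c} : Finset (Fin r))).card = r - 2 := by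
    rw [Finset.card_sdiff_of_subset (subset_univ _), card_univ, Fintype.card_fin,
      Finset.card_pair hac]
  have h2 : r - 2 - 1 = r - 3 := by omega
  rw [Mf_eq_sum_sdiff, sum_withzero x A B (by simp [Ne.symm ha, Ne.symm hc]) hx0 hxi, hcard, h2]

omit hr hx0 hxi in
lemma cast_mm (m : ℕ) : ((m * m - m : ℕ) : ℝ) = (m : ℝ) * m - m := by
  rcases Nat.eq_zero_or_pos m with h | h
  · subst h; simp
  · rw [Nat.cast_sub (Nat.le_mul_of_pos_left m h)]; push_cast; ring

omit hr hx0 hxi in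
lemma cast_Ff (a c : Fin r) : ((Ff x a c : ℕ) : ℝ)
    = (Mf x a c : ℝ) * (Mf x a c) - (Mf x a c) := by
  rw [Ff]; exact cast_mm _

omit hr hx0 hxi in
lemma cast_wf_diag (a : Fin r) : ((wf x a a : ℕ) : ℝ) = (x a : ℝ) * (x a) - (x a) := by
  rw [wf, if_pos rfl]; exact cast_mm _

omit hr hx0 hxi in
lemma cast_wf_off {a c : Fin r} (hac : a ≠ c) : ((wf x a c : ℕ) : ℝ) = (x a : ℝ) * (x c) := by
  rw [wf, if_neg hac, Nat.sub_zero, Nat.cast_mul]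

lemma eval_sum :
    ((∑ a, ∑ c, wf x a c * Ff x a c : ℕ) : ℝ) =
      ((A:ℝ) * A - A) * ((((r:ℝ)-1)*B) * (((r:ℝ)-1)*B) - (((r:ℝ)-1)*B))
      + 2 * ((r:ℝ) - 1) * ((A:ℝ) * B) *
          ((((r:ℝ)-2)*B) * (((r:ℝ)-2)*B) - (((r:ℝ)-2)*B))
      + ((r:ℝ) - 1) * ((B:ℝ) * B - B) *
          (((A:ℝ)+((r:ℝ)-2)*B) * ((A:ℝ)+((r:ℝ)-2)*B) - ((A:ℝ)+((r:ℝ)-2)*B))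
      + ((r:ℝ) - 1) * ((r:ℝ) - 2) * ((B:ℝ) * B) *
          (((A:ℝ)+((r:ℝ)-3)*B) * ((A:ℝ)+((r:ℝ)-3)*B) - ((A:ℝ)+((r:ℝ)-3)*B)) := by
  have hc1 : (((r - 1) * B : ℕ) : ℝ) = ((r:ℝ)-1)*B := by
    rw [Nat.cast_mul, Nat.cast_sub (by omega : 1 ≤ r)]; norm_num
  have hc2 : (((r - 2) * B : ℕ) : ℝ) = ((r:ℝ)-2)*B := by
    rw [Nat.cast_mul, Nat.cast_sub (by omega : 2 ≤ r)]; norm_num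
  have hc3 : ((A + (r - 2) * B : ℕ) : ℝ) = (A:ℝ)+((r:ℝ)-2)*B := by
    rw [Nat.cast_add, hc2]
  have hc4 : ((A + (r - 3) * B : ℕ) : ℝ) = (A:ℝ)+((r:ℝ)-3)*B := by
    rw [Nat.cast_add, Nat.cast_mul, Nat.cast_sub (by omega : 3 ≤ r)]; norm_num
  set V1 : ℝ := ((A:ℝ) * A - A) * ((((r:ℝ)-1)*B) * (((r:ℝ)-1)*B) - (((r:ℝ)-1)*B)) with hV1
  set V2 : ℝ := ((A:ℝ) * B) * ((((r:ℝ)-2)*B) * (((r:ℝ)-2)*B) - (((r:ℝ)-2)*B)) with hV2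
  set V3 : ℝ := ((B:ℝ) * B - B) *
      (((A:ℝ)+((r:ℝ)-2)*B) * ((A:ℝ)+((r:ℝ)-2)*B) - ((A:ℝ)+((r:ℝ)-2)*B)) with hV3
  set V4 : ℝ := ((B:ℝ) * B) *
      (((A:ℝ)+((r:ℝ)-3)*B) * ((A:ℝ)+((r:ℝ)-3)*B) - ((A:ℝ)+((r:ℝ)-3)*B)) with hV4
  have h00 : ((wf x 0 0 * Ff x 0 0 : ℕ) : ℝ) = V1 := by
    rw [Nat.cast_mul, cast_wf_diag x, cast_Ff x, Mf00 x B hxi, hc1, hx0, hV1]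
  have h0c : ∀ c : Fin r, c ≠ 0 → ((wf x 0 c * Ff x 0 c : ℕ) : ℝ) = V2 := by
    intro c hcne
    rw [Nat.cast_mul, cast_wf_off x (Ne.symm hcne), cast_Ff x,
      Mf0c x B hxi hcne, hc2, hx0, hxi c hcne, hV2]
  have hc0 : ∀ a : Fin r, a ≠ 0 → ((wf x a 0 * Ff x a 0 : ℕ) : ℝ) = V2 := by
    intro a hane
    rw [Nat.cast_mul, cast_wf_off x hane, cast_Ff x,
      Mfc0 x B hxi hane, hc2, hx0, hxi a hane, hV2]
    ring
  have haa : ∀ a : Fin r, a ≠ 0 → ((wf x a a * Ff x a a : ℕ) : ℝ) = V3 := by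
    intro a hane
    rw [Nat.cast_mul, cast_wf_diag x, cast_Ff x,
      Mfaa x A B hr hx0 hxi hane, hc3, hxi a hane, hV3]
  have hoff : ∀ a c : Fin r, a ≠ 0 → c ≠ 0 → a ≠ c →
      ((wf x a c * Ff x a c : ℕ) : ℝ) = V4 := by
    intro a c hane hcne hac
    rw [Nat.cast_mul, cast_wf_off x hac, cast_Ff x,
      Mfac x A B hr hx0 hxi hane hcne hac, hc4, hxi a hane, hxi c hcne, hV4]
  have hcast : ((∑ a, ∑ c, wf x a c * Ff x a c : ℕ) : ℝ)
      = ∑ a : Fin r, ∑ c : Fin r, ((wf x a c * Ff x a c : ℕ) : ℝ) := by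
    rw [Nat.cast_sum]
    exact Finset.sum_congr rfl fun a _ => Nat.cast_sum _ _
  have hrm1 : (((univ : Finset (Fin r)).erase 0).card : ℝ) = (r:ℝ) - 1 := by
    rw [Finset.card_erase_of_mem (mem_univ _), card_univ, Fintype.card_fin,
      Nat.cast_sub (by omega : 1 ≤ r)]; norm_num
  have hrm2 : ∀ a : Fin r, a ≠ 0 →
      (((((univ : Finset (Fin r)).erase 0)).erase a).card : ℝ) = (r:ℝ) - 2 := by
    intro a hane
    rw [Finset.card_erase_of_mem (Finset.mem_erase.mpr ⟨hane, mem_univ _⟩),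
      Finset.card_erase_of_mem (mem_univ _), card_univ, Fintype.card_fin]
    have : r - 1 - 1 = r - 2 := by omega
    rw [this, Nat.cast_sub (by omega : 2 ≤ r)]; norm_num
  have inner0 : (∑ c : Fin r, ((wf x 0 c * Ff x 0 c : ℕ) : ℝ)) = V1 + ((r:ℝ)-1) * V2 := by
    rw [← Finset.add_sum_erase _ _ (mem_univ (0 : Fin r)), h00,
      Finset.sum_congr rfl (fun c hcm => h0c c (Finset.ne_of_mem_erase hcm)),
      sum_const, nsmul_eq_mul, hrm1]
  have innerA : ∀ a : Fin r, a ≠ 0 →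
      (∑ c : Fin r, ((wf x a c * Ff x a c : ℕ) : ℝ))
        = V2 + (V3 + ((r:ℝ)-2) * V4) := by
    intro a hane
    rw [← Finset.add_sum_erase _ _ (mem_univ (0 : Fin r)), hc0 a hane,
      ← Finset.add_sum_erase _ _ (Finset.mem_erase.mpr ⟨hane, mem_univ a⟩),
      haa a hane,
      Finset.sum_congr rfl (fun c hcm => hoff a c hane
        (Finset.ne_of_mem_erase (Finset.mem_of_mem_erase hcm))
        (Ne.symm (Finset.ne_of_mem_erase hcm))),
      sum_const, nsmul_eq_mul, hrm2 a hane]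
  rw [hcast, ← Finset.add_sum_erase _ _ (mem_univ (0 : Fin r)), inner0,
    Finset.sum_congr rfl (fun a ham => innerA a (Finset.ne_of_mem_erase ham)),
    sum_const, nsmul_eq_mul, hrm1]
  ring

end twoval

lemma card_homs :
    Nat.card {f : cyc4 →g multipartite x // Function.Injective f}
      = ∑ a, ∑ c, wf x a c * Ff x a c := by
  rw [Nat.card_congr (tupEquiv x), Nat.card_eq_fintype_card, Fintype.card_subtype, count_cond]

lemma div8_close (S : ℕ) : |((S/8 : ℕ):ℝ) - (S:ℝ)/8| ≤ 1 := by
  have hmod := Nat.div_add_mod S 8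
  have hmlt : S % 8 < 8 := Nat.mod_lt _ (by norm_num)
  have hcast : (S:ℝ) = 8*((S/8 :ℕ):ℝ) + ((S%8 : ℕ):ℝ) := by exact_mod_cast hmod.symm
  have hm0 : (0:ℝ) ≤ ((S%8 : ℕ):ℝ) := Nat.cast_nonneg _
  have hm7 : ((S%8 : ℕ):ℝ) ≤ 7 := by exact_mod_cast Nat.lt_succ_iff.mp hmlt
  rw [abs_le]
  constructor <;> linarith

/-- Asymptotic `C₄`-density of the slightly unbalanced complete `r`-partite graph
whose first part has size `(1+η(r-1))n/r` and remaining parts have size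
`(1-η)n/r`. -/
theorem unbalanced_density {r : ℕ} (hr : 3 ≤ r) (η : ℝ) (hη0 : 0 < η) (hη1 : η < 1) :
    ∀ ε : ℝ, 0 < ε → ∃ N : ℕ, ∀ n : ℕ, N ≤ n → ∀ x : Fin r → ℕ,
      ((x ⟨0, by omega⟩ : ℝ) = (1 + η * ((r : ℝ) - 1)) * n / r) →
      (∀ i : Fin r, i.1 ≠ 0 → (x i : ℝ) = (1 - η) * n / r) →
      |(numCopies cyc4 (multipartite x) : ℝ) / (n.choose 4 : ℝ) -
        (3 * ((r : ℝ) - 1) * ((r : ℝ) ^ 2 - 3 * r + 3) / (r : ℝ) ^ 3 -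
          6 * η ^ 2 * ((2 * (r : ℝ) ^ 3 - 10 * r ^ 2 + 17 * r - 9) / (r : ℝ) ^ 3) +
          12 * η ^ 3 * (((r : ℝ) ^ 3 - 6 * r ^ 2 + 11 * r - 6) / (r : ℝ) ^ 3) -
          3 * η ^ 4 * (((r : ℝ) ^ 3 - 8 * r ^ 2 + 16 * r - 9) / (r : ℝ) ^ 3))| < ε := by
  intro ε hε
  haveI : NeZero r := ⟨by omega⟩
  have hR3 : (3:ℝ) ≤ (r:ℝ) := by exact_mod_cast hr
  have hRne : (r:ℝ) ≠ 0 := by linarith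
  set R : ℝ := (r:ℝ) with hRdef
  set α : ℝ := (1 + η * (R - 1)) / R with hα
  set β : ℝ := (1 - η) / R with hβ
  have hαpos : 0 < α := by
    rw [hα]
    apply div_pos
    · nlinarith
    · linarith
  have hβpos : 0 < β := by
    rw [hβ]
    apply div_pos <;> linarith
  set L : ℝ := (3 * (R - 1) * (R ^ 2 - 3 * R + 3) / R ^ 3 -
          6 * η ^ 2 * ((2 * R ^ 3 - 10 * R ^ 2 + 17 * R - 9) / R ^ 3) +
          12 * η ^ 3 * ((R ^ 3 - 6 * R ^ 2 + 11 * R - 6) / R ^ 3) -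
          3 * η ^ 4 * ((R ^ 3 - 8 * R ^ 2 + 16 * R - 9) / R ^ 3)) with hL
  set g : ℝ → ℝ := fun t =>
      3 * ((α*α - α*t) * (((R-1)*β)*((R-1)*β) - ((R-1)*β)*t)
        + 2 * (R-1) * (α*β) * (((R-2)*β)*((R-2)*β) - ((R-2)*β)*t)
        + (R-1) * (β*β - β*t) * ((α+(R-2)*β)*(α+(R-2)*β) - (α+(R-2)*β)*t)
        + (R-1) * (R-2) * (β*β) * ((α+(R-3)*β)*(α+(R-3)*β) - (α+(R-3)*β)*t))
      / ((1-t)*(1-2*t)*(1-3*t)) with hgdef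
  have hg0 : g 0 = L := by
    rw [hgdef]
    simp only
    rw [hα, hβ, hL]
    norm_num
    field_simp
    ring
  have hcont : ContinuousAt g 0 := by
    rw [hgdef]
    apply ContinuousAt.div (by fun_prop) (by fun_prop)
    norm_num
  have htend : Filter.Tendsto (fun n : ℕ => g (1 / n)) Filter.atTop (nhds L) := by
    rw [← hg0]
    exact hcont.tendsto.comp tendsto_one_div_atTop_nhds_zero_nat
  clear_value α β L g
  rw [Metric.tendsto_atTop] at htend
  obtain ⟨N1, hN1⟩ := htend (ε/2) (by linarith)
  obtain ⟨N2, hN2⟩ := exists_nat_ge (2/ε + 5)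
  refine ⟨max N1 (max N2 5), fun n hn x hx0 hxi => ?_⟩
  have hnN1 : N1 ≤ n := le_trans (le_max_left _ _) hn
  have hnN2 : (2/ε + 5 : ℝ) ≤ n := le_trans hN2 (by
    exact_mod_cast le_trans (le_max_left N2 5) (le_trans (le_max_right N1 _) hn))
  have hn5 : 5 ≤ n := le_trans (le_max_right N2 5) (le_trans (le_max_right N1 _) hn)
  have hn5R : (5:ℝ) ≤ (n:ℝ) := by exact_mod_cast hn5
  have hnne : (n:ℝ) ≠ 0 := by linarith
  -- identify the part sizes
  have h0fin : (⟨0, by omega⟩ : Fin r) = 0 := rfl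
  rw [h0fin] at hx0
  set A : ℕ := x 0 with hAdef
  set B : ℕ := x ⟨1, by omega⟩ with hBdef
  have hone : ((⟨1, by omega⟩ : Fin r) : Fin r).1 ≠ 0 := by simp
  have hBval : (B:ℝ) = (1 - η) * n / r := hxi _ hone
  have hAR : (A:ℝ) = α * n := by rw [hα, hx0]; ring
  have hBR : (B:ℝ) = β * n := by rw [hβ, hBval]; ring
  have hxiB : ∀ i : Fin r, i ≠ 0 → x i = B := by
    intro i hi
    have hi' : i.1 ≠ 0 := by
      intro h; exact hi (Fin.ext (by simpa using h))
    have : (x i : ℝ) = (B:ℝ) := by rw [hxi i hi', hBval]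
    exact_mod_cast this
  have hA1 : 1 ≤ A := by
    by_contra h
    have hA0 : A = 0 := by omega
    rw [hA0, Nat.cast_zero] at hAR
    nlinarith [mul_pos hαpos (show (0:ℝ) < (n:ℝ) by linarith)]
  have hB1 : 1 ≤ B := by
    by_contra h
    have hB0 : B = 0 := by omega
    rw [hB0, Nat.cast_zero] at hBR
    nlinarith [mul_pos hβpos (show (0:ℝ) < (n:ℝ) by linarith)]
  -- the exact count
  set S : ℕ := ∑ a, ∑ c, wf x a c * Ff x a c with hSdef
  have hnum : numCopies cyc4 (multipartite x) = S / 8 := by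
    unfold numCopies
    rw [card_homs, card_aut, hSdef]
  have hSR : (S:ℝ) =
      ((A:ℝ) * A - A) * (((R-1)*(B:ℝ)) * ((R-1)*(B:ℝ)) - ((R-1)*(B:ℝ)))
      + 2 * (R - 1) * ((A:ℝ) * B) * (((R-2)*(B:ℝ)) * ((R-2)*(B:ℝ)) - ((R-2)*(B:ℝ)))
      + (R - 1) * ((B:ℝ) * B - B) *
          (((A:ℝ)+(R-2)*(B:ℝ)) * ((A:ℝ)+(R-2)*(B:ℝ)) - ((A:ℝ)+(R-2)*(B:ℝ)))
      + (R - 1) * (R - 2) * ((B:ℝ) * B) *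
          (((A:ℝ)+(R-3)*(B:ℝ)) * ((A:ℝ)+(R-3)*(B:ℝ)) - ((A:ℝ)+(R-3)*(B:ℝ))) := by
    rw [hSdef]
    exact eval_sum x A B hr rfl hxiB
  clear_value S
  set D : ℝ := (n:ℝ) * ((n:ℝ)-1) * ((n:ℝ)-2) * ((n:ℝ)-3) with hDdef
  have hD1 : (0:ℝ) < (n:ℝ)-1 := by linarith
  have hD2 : (0:ℝ) < (n:ℝ)-2 := by linarith
  have hD3 : (0:ℝ) < (n:ℝ)-3 := by linarith
  have hDpos : 0 < D := by
    rw [hDdef]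
    have : (0:ℝ) < (n:ℝ) := by linarith
    positivity
  have hch24 : ((n.choose 4 : ℕ):ℝ) * 24 = D := by
    have h1 : n.descFactorial 4 = 24 * n.choose 4 := by
      rw [Nat.descFactorial_eq_factorial_mul_choose]
      norm_num [Nat.factorial]
    have c1 : ((n-1:ℕ):ℝ) = (n:ℝ)-1 := by rw [Nat.cast_sub (by omega)]; norm_num
    have c2 : ((n-2:ℕ):ℝ) = (n:ℝ)-2 := by rw [Nat.cast_sub (by omega)]; norm_num
    have c3 : ((n-3:ℕ):ℝ) = (n:ℝ)-3 := by rw [Nat.cast_sub (by omega)]; norm_num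
    have h2 : ((n.descFactorial 4 : ℕ):ℝ) = D := by
      simp only [Nat.descFactorial_succ, Nat.descFactorial_zero, Nat.mul_one, Nat.sub_zero,
        Nat.cast_mul, c1, c2, c3, hDdef]
      ring
    rw [← h2, h1]
    push_cast
    ring
  have hchpos : (0:ℝ) < (n.choose 4 : ℕ) := by nlinarith [hch24, hDpos]
  have hdenne : ((1-1/(n:ℝ))*(1-2*(1/(n:ℝ)))*(1-3*(1/(n:ℝ)))) ≠ 0 := by
    have hnpos : (0:ℝ) < (n:ℝ) := by linarith
    have e1 : (0:ℝ) < 1-1/(n:ℝ) := by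
      rw [sub_pos]; rw [div_lt_one hnpos]; linarith
    have e2 : (0:ℝ) < 1-2*(1/(n:ℝ)) := by
      rw [mul_one_div, sub_pos, div_lt_one hnpos]; linarith
    have e3 : (0:ℝ) < 1-3*(1/(n:ℝ)) := by
      rw [mul_one_div, sub_pos, div_lt_one hnpos]; linarith
    positivity
  have hgn : g (1/(n:ℝ)) = 3 * (S:ℝ) / D := by
    rw [hgdef]
    simp only
    rw [hSR, hAR, hBR, div_eq_div_iff hdenne (by linarith), hDdef]
    field_simp
  -- now the final bound
  clear hSR hdenne hgdef hg0 hcont hxiB hxi hx0 hAR hBR hBval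
  clear_value D
  rw [hnum]
  have hq : |((S/8 : ℕ):ℝ) - (S:ℝ)/8| ≤ 1 := div8_close S
  have hkey : ((S/8 : ℕ):ℝ) / (n.choose 4 : ℕ) - L
      = (((S/8 : ℕ):ℝ) - (S:ℝ)/8) / (n.choose 4 : ℕ) + (g (1/(n:ℝ)) - L) := by
    rw [hgn]
    have hch : ((n.choose 4 : ℕ):ℝ) = D / 24 := by linarith
    rw [hch]
    field_simp
    ring
  have hterm2 : |g (1/(n:ℝ)) - L| < ε/2 := by
    have := hN1 n hnN1
    rwa [Real.dist_eq] at this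
  have hterm1 : |(((S/8 : ℕ):ℝ) - (S:ℝ)/8) / (n.choose 4 : ℕ)| ≤ ε/2 := by
    rw [abs_div, abs_of_pos hchpos]
    have h12 : (12:ℝ) ≤ ((n:ℝ)-1)*((n:ℝ)-2) := by nlinarith [hn5R]
    have h24 : (24:ℝ) ≤ ((n:ℝ)-1)*((n:ℝ)-2)*((n:ℝ)-3) := by nlinarith [hn5R, h12]
    have hDn : 24*(n:ℝ) ≤ D := by
      rw [hDdef]; nlinarith [hn5R, h24]
    have hchge : (2/ε : ℝ) ≤ ((n.choose 4 : ℕ):ℝ) := by linarith [hch24, hnN2]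
    rw [div_le_iff₀ hchpos]
    have hεch : 2 ≤ ε * ((n.choose 4 : ℕ):ℝ) := by
      rw [div_le_iff₀ hε] at hchge
      nlinarith [hchge]
    linarith [hq, hεch]
  calc |((S/8 : ℕ):ℝ) / (n.choose 4 : ℕ) - L|
      = |(((S/8 : ℕ):ℝ) - (S:ℝ)/8) / (n.choose 4 : ℕ) + (g (1/(n:ℝ)) - L)| := by rw [hkey]
    _ ≤ |(((S/8 : ℕ):ℝ) - (S:ℝ)/8) / (n.choose 4 : ℕ)| + |g (1/(n:ℝ)) - L| := abs_add_le _ _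
    _ < ε/2 + ε/2 := by
        apply add_lt_add_of_le_of_lt hterm1 hterm2
    _ = ε := by ring
end

section
/- For every ε > 0 and integer r ≥ 3, there exists δ > 0 such that: if G is a complete r-partite graph on n vertices (n sufficiently large) with parts X_1,...,X_r and N(C_4,G)/C(n,4) > 3(r−1)(r^2−3r+3)/r^3 − δ, then every part satisfies (1−ε)n/r ≤ |X_i| ≤ (1+ε)n/r. -/
/-!
Write `a = x / n` for the part proportions. Every injective homomorphism `C₄ → G` is a closed
4-walk whose consecutive vertices lie in different parts, and `C₄` has 8 automorphisms, so the
number of 4-cycles is at most `n⁴ t(a) / 8`, where `t` is the `C₄`-homomorphism density of the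
complete multipartite graphon; with `C(n,4) ~ n⁴ / 24` the `C₄`-density is asymptotically at most
`3 t(a)`. On the simplex, `t` is a quartic in the power sums, and averaging two unequal coordinates
strictly increases it, so the barycenter is its unique maximiser, where `3 t` is the optimal
constant. The points of the simplex with a coordinate outside `((1 - ε) / r, (1 + ε) / r)` form a
compact set avoiding the barycenter, so `t` stays a fixed `δ` below its maximum there.
-/

open Finset Filter Topology Asymptotics

section C4HomDensity

variable {ι : Type*} [Fintype ι]

variable (ι) in
noncomputable def simplexCenter : ι → ℝ := fun _ => (Fintype.card ι : ℝ)⁻¹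

lemma simplexCenter_mem_stdSimplex [Nonempty ι] : simplexCenter ι ∈ stdSimplex ℝ ι := by
  refine ⟨fun _ => inv_nonneg.2 (Nat.cast_nonneg _), ?_⟩
  simp [simplexCenter]

variable [DecidableEq ι]

-- The `C₄`-homomorphism density of the complete multipartite graphon with part weights `a`.
noncomputable def c4HomDensity (a : ι → ℝ) : ℝ :=
  ∑ i, ∑ j, ∑ k, ∑ l, if i ≠ j ∧ j ≠ k ∧ k ≠ l ∧ l ≠ i then a i * a j * a k * a l else 0

lemma sum_ite_ne_and_ne (a : ι → ℝ) (i k : ι) :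
    ∑ j, (if j ≠ i ∧ j ≠ k then a j else 0) = ∑ j, a j - a i - a k + if i = k then a i else 0 := by
  have h : ∀ j, (if j ≠ i ∧ j ≠ k then a j else 0) = a j - (if i = j then a j else 0)
      - (if k = j then a j else 0) + if i = k ∧ i = j then a j else 0 := by
    intro j; split_ifs <;> grind
  simp only [h, sum_add_distrib, sum_sub_distrib, sum_ite_eq, mem_univ, if_true, ite_and]
  split_ifs <;> simp_all

lemma c4HomDensity_eq_sum_sq (a : ι → ℝ) :
    c4HomDensity a = ∑ i, ∑ k, a i * a k * (∑ j, if j ≠ i ∧ j ≠ k then a j else 0) ^ 2 := by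
  unfold c4HomDensity
  refine sum_congr rfl fun i _ => ?_
  rw [sum_comm]
  refine sum_congr rfl fun k _ => ?_
  rw [sq, sum_mul_sum, mul_sum]
  refine sum_congr rfl fun j _ => ?_
  rw [mul_sum]
  refine sum_congr rfl fun l _ => ?_
  split_ifs <;> grind

lemma c4HomDensity_eq (a : ι → ℝ) :
    c4HomDensity a = (∑ i, a i) ^ 4 - 4 * (∑ i, a i) ^ 2 * (∑ i, a i ^ 2)
      + 2 * (∑ i, a i ^ 2) ^ 2 + 4 * (∑ i, a i) * (∑ i, a i ^ 3) - 3 * ∑ i, a i ^ 4 := by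
  simp only [c4HomDensity_eq_sum_sq, sum_ite_ne_and_ne]
  set S := ∑ i, a i
  have h : ∀ i k, a i * a k * (S - a i - a k + if i = k then a i else 0) ^ 2 =
      S ^ 2 * (a i * a k) + a i ^ 3 * a k + a i * a k ^ 3 - 2 * S * (a i ^ 2 * a k)
        - 2 * S * (a i * a k ^ 2) + 2 * (a i ^ 2 * a k ^ 2)
        + if i = k then 2 * S * a i ^ 3 - 3 * a i ^ 4 else 0 := by
    intro i k; split_ifs with hik
    · subst hik; ring
    · ring
  simp only [h, sum_add_distrib, sum_sub_distrib, sum_ite_eq, mem_univ, if_true, ← mul_sum,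
    ← sum_mul]
  ring

lemma c4HomDensity_const_mul (c : ℝ) (a : ι → ℝ) :
    c4HomDensity (fun i => c * a i) = c ^ 4 * c4HomDensity a := by
  simp only [c4HomDensity, mul_sum, mul_ite, mul_zero]
  refine sum_congr rfl fun i _ => sum_congr rfl fun j _ => sum_congr rfl fun k _ =>
    sum_congr rfl fun l _ => ?_
  split_ifs <;> ring

lemma continuous_c4HomDensity : Continuous (c4HomDensity : (ι → ℝ) → ℝ) := by
  rw [show (c4HomDensity : (ι → ℝ) → ℝ) = _ from funext c4HomDensity_eq]
  fun_prop

lemma sum_comp_update {α M : Type*} [AddCommGroup M] (a : ι → α) (p : α → M) (j : ι) (v : α) :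
    ∑ t, p (Function.update a j v t) = ∑ t, p (a t) - p (a j) + p v := by
  rw [← sum_erase_add _ _ (mem_univ j), ← sum_erase_add _ _ (mem_univ j), Function.update_self,
    sum_congr rfl fun t ht => by rw [Function.update_of_ne (ne_of_mem_erase ht)]]
  abel

lemma sum_comp_update_update {α M : Type*} [AddCommGroup M] {i j : ι} (hij : i ≠ j)
    (a : ι → α) (p : α → M) (v : α) :
    ∑ t, p (Function.update (Function.update a i v) j v t)
      = ∑ t, p (a t) - p (a i) - p (a j) + p v + p v := by
  rw [sum_comp_update, sum_comp_update, Function.update_of_ne hij.symm]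
  abel

noncomputable def averageAt (a : ι → ℝ) (i j : ι) : ι → ℝ :=
  Function.update (Function.update a i ((a i + a j) / 2)) j ((a i + a j) / 2)

lemma averageAt_mem_stdSimplex {a : ι → ℝ} (ha : a ∈ stdSimplex ℝ ι) {i j : ι} (hij : i ≠ j) :
    averageAt a i j ∈ stdSimplex ℝ ι := by
  refine ⟨fun t => ?_, ?_⟩
  · have := ha.1 i; have := ha.1 j; have := ha.1 t
    unfold averageAt
    rcases eq_or_ne t j with rfl | htj
    · simp only [Function.update_self]; linarith
    rcases eq_or_ne t i with rfl | hti
    · simp only [Function.update_of_ne htj, Function.update_self]; linarith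
    · simpa only [Function.update_of_ne htj, Function.update_of_ne hti]
  · rw [averageAt, sum_comp_update_update hij a (fun x => x), ha.2]
    ring

lemma sum_sq_sub_sq_sub_sq_le {a : ι → ℝ} (ha : a ∈ stdSimplex ℝ ι) {i j : ι} (hij : i ≠ j) :
    ∑ t, a t ^ 2 - a i ^ 2 - a j ^ 2 ≤ (1 - a i - a j) ^ 2 := by
  set c := Function.update (Function.update a i 0) j 0
  have hc : 0 ≤ c := by
    intro t
    simp only [c, Function.update_apply]
    split_ifs <;> first | exact le_rfl | exact ha.1 t
  have h1 := sum_comp_update_update hij a (fun x => x) 0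
  have h2 := sum_comp_update_update hij a (· ^ 2) 0
  rw [ha.2] at h1
  have := sum_sq_le_sq_sum_of_nonneg (s := univ) (f := c) fun t _ => hc t
  rw [h1, h2] at this
  simpa using this

lemma c4HomDensity_lt_averageAt {a : ι → ℝ} (ha : a ∈ stdSimplex ℝ ι) {i j : ι} (hij : i ≠ j)
    (hne : a i ≠ a j) : c4HomDensity a < c4HomDensity (averageAt a i j) := by
  have hR := sum_sq_sub_sq_sub_sq_le ha hij
  have hi := ha.1 i
  have hj := ha.1 j
  have hs : a i + a j ≤ 1 := by
    rw [← sum_pair hij, ← ha.2]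
    exact sum_le_sum_of_subset_of_nonneg (subset_univ _) fun t _ _ => ha.1 t
  have hd : 0 < (a i - a j) ^ 2 := by positivity [sub_ne_zero.2 hne]
  have hgain : c4HomDensity (averageAt a i j) - c4HomDensity a
      = (a i - a j) ^ 2 * (2 - 2 * (∑ t, a t ^ 2 - a i ^ 2 - a j ^ 2)
          + 5 / 4 * (a i + a j) ^ 2 - 3 * (a i + a j) - (a i - a j) ^ 2 / 8) := by
    rw [c4HomDensity_eq, c4HomDensity_eq, averageAt, sum_comp_update_update hij a (fun x => x),
      sum_comp_update_update hij a (· ^ 2), sum_comp_update_update hij a (· ^ 3),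
      sum_comp_update_update hij a (· ^ 4), ha.2]
    ring
  -- `∑ t, a t ^ 2 - a i ^ 2 - a j ^ 2 ≤ (1 - s) ^ 2` with `s = a i + a j ≤ 1` bounds the
  -- bracket below by `s - 7 s ^ 2 / 8 ≥ s / 8`.
  have hs0 : 0 < a i + a j := lt_of_le_of_ne (add_nonneg hi hj) fun h => hne (by linarith)
  have hbracket : 0 < 2 - 2 * (∑ t, a t ^ 2 - a i ^ 2 - a j ^ 2)
      + 5 / 4 * (a i + a j) ^ 2 - 3 * (a i + a j) - (a i - a j) ^ 2 / 8 := by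
    nlinarith [mul_nonneg hi hj]
  linarith [mul_pos hd hbracket]

lemma c4HomDensity_simplexCenter [Nonempty ι] :
    c4HomDensity (simplexCenter ι) = ((Fintype.card ι : ℝ) - 1)
      * ((Fintype.card ι : ℝ) ^ 2 - 3 * Fintype.card ι + 3) / (Fintype.card ι : ℝ) ^ 3 := by
  have : (Fintype.card ι : ℝ) ≠ 0 := Nat.cast_ne_zero.2 Fintype.card_ne_zero
  simp only [c4HomDensity_eq, simplexCenter, sum_const, card_univ, nsmul_eq_mul]
  field_simp
  ring

lemma exists_ne_of_ne_simplexCenter {a : ι → ℝ} (ha : a ∈ stdSimplex ℝ ι)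
    (hne : a ≠ simplexCenter ι) : ∃ i j, i ≠ j ∧ a i ≠ a j := by
  by_contra! h
  refine hne (funext fun t => ?_)
  have hconst : ∀ i, a i = a t := fun i => by
    rcases eq_or_ne i t with rfl | hit
    · rfl
    · exact h i t hit
  have := ha.2
  rw [sum_congr rfl fun i _ => hconst i, sum_const, card_univ, nsmul_eq_mul] at this
  exact eq_inv_of_mul_eq_one_right this

lemma c4HomDensity_lt_simplexCenter {a : ι → ℝ} (ha : a ∈ stdSimplex ℝ ι)
    (hne : a ≠ simplexCenter ι) : c4HomDensity a < c4HomDensity (simplexCenter ι) := by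
  have : Nonempty ι := by
    by_contra h
    rw [not_nonempty_iff] at h
    simpa using ha.2
  obtain ⟨b, hb, hmax⟩ := (isCompact_stdSimplex ℝ ι).exists_isMaxOn
    ⟨_, simplexCenter_mem_stdSimplex⟩ continuous_c4HomDensity.continuousOn
  have hlt : ∀ c ∈ stdSimplex ℝ ι, c ≠ simplexCenter ι → c4HomDensity c < c4HomDensity b := by
    intro c hc hne
    obtain ⟨i, j, hij, hcij⟩ := exists_ne_of_ne_simplexCenter hc hne
    exact (c4HomDensity_lt_averageAt hc hij hcij).trans_le (hmax (averageAt_mem_stdSimplex hc hij))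
  have hb : b = simplexCenter ι := by
    by_contra h
    exact lt_irrefl _ (hlt b hb h)
  exact hb ▸ hlt a ha hne

lemma exists_forall_mem_Ioo_of_lt_c4HomDensity {ε : ℝ} (hε : 0 < ε) :
    ∃ δ > 0, ∀ a ∈ stdSimplex ℝ ι, c4HomDensity (simplexCenter ι) - δ < c4HomDensity a →
      ∀ i, a i ∈ Set.Ioo ((1 - ε) / Fintype.card ι) ((1 + ε) / Fintype.card ι) := by
  set K := stdSimplex ℝ ι ∩
    ⋃ i, (fun a : ι → ℝ => a i) ⁻¹' (Set.Ioo ((1 - ε) / Fintype.card ι) ((1 + ε) / Fintype.card ι))ᶜ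
  have hK : IsCompact K := (isCompact_stdSimplex ℝ ι).inter_right
    (isClosed_iUnion_of_finite fun i => isOpen_Ioo.isClosed_compl.preimage (continuous_apply i))
  have hgap : ∀ a ∈ K, 0 < c4HomDensity (simplexCenter ι) - c4HomDensity a := by
    rintro a ⟨ha, hfar⟩
    obtain ⟨i, hi⟩ := Set.mem_iUnion.1 hfar
    refine sub_pos.2 (c4HomDensity_lt_simplexCenter ha fun hc => hi ?_)
    have : (0 : ℝ) < Fintype.card ι := by exact_mod_cast Fintype.card_pos_iff.2 ⟨i⟩
    simp only [hc, simplexCenter, Set.mem_Ioo]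
    constructor <;> rw [div_eq_mul_inv] <;> nlinarith [inv_pos.2 this]
  obtain ⟨δ, hδ, hle⟩ := hK.exists_forall_le'
    (f := fun a => c4HomDensity (simplexCenter ι) - c4HomDensity a)
    (continuous_const.sub continuous_c4HomDensity).continuousOn hgap
  refine ⟨δ, hδ, fun a ha hgt i => ?_⟩
  by_contra hi
  linarith [hle a ⟨ha, Set.mem_iUnion.2 ⟨i, hi⟩⟩]

end C4HomDensity

lemma eight_le_card_aut_cyc4 : 8 ≤ Nat.card {f : cyc4 →g cyc4 // Function.Injective f} := by
  let d : Bool × Fin 4 → Fin 4 → Fin 4 := fun p m => if p.1 then p.2 - m else p.2 + m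
  have hadj : ∀ p u v, cyc4.Adj u v → cyc4.Adj (d p u) (d p v) := by
    simp only [cyc4, SimpleGraph.fromRel_adj]; decide
  have hinj : ∀ p, Function.Injective (d p) := by decide
  have hd : Function.Injective d := by decide
  have : Finite (cyc4 →g cyc4) := Finite.of_injective _ DFunLike.coe_injective
  simpa using Nat.card_le_card_of_injective
    (fun p => (⟨⟨d p, hadj p _ _⟩, hinj p⟩ : {f : cyc4 →g cyc4 // Function.Injective f}))
    fun p q h => hd (congrArg (fun f : {f : cyc4 →g cyc4 // Function.Injective f} => ⇑f.1) h)

lemma numCopies_cyc4_le {W : Type*} [Finite W] (G : SimpleGraph W) :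
    (numCopies cyc4 G : ℝ) ≤ Nat.card (cyc4 →g G) / 8 := by
  have : Finite (cyc4 →g G) := Finite.of_injective _ DFunLike.coe_injective
  calc (numCopies cyc4 G : ℝ) ≤ (Nat.card {f : cyc4 →g G // Function.Injective f} / 8 : ℕ) := by
        exact_mod_cast Nat.div_le_div_left eight_le_card_aut_cyc4 (by norm_num)
    _ ≤ Nat.card {f : cyc4 →g G // Function.Injective f} / 8 := Nat.cast_div_le
    _ ≤ Nat.card (cyc4 →g G) / 8 := by gcongr; exact Finite.card_subtype_le _

lemma card_hom_cyc4_completeMultipartiteGraph_le {ι : Type*} [Fintype ι] [DecidableEq ι]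
    (V : ι → Type*) [∀ i, Fintype (V i)] :
    (Nat.card (cyc4 →g SimpleGraph.completeMultipartiteGraph V) : ℝ)
      ≤ c4HomDensity (fun i => (Fintype.card (V i) : ℝ)) := by
  let W := Σ i, V i
  let Q := {q : W × W × W × W //
    q.1.1 ≠ q.2.1.1 ∧ q.2.1.1 ≠ q.2.2.1.1 ∧ q.2.2.1.1 ≠ q.2.2.2.1 ∧ q.2.2.2.1 ≠ q.1.1}
  have hadj : cyc4.Adj 0 1 ∧ cyc4.Adj 1 2 ∧ cyc4.Adj 2 3 ∧ cyc4.Adj 3 0 := by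
    simp only [cyc4, SimpleGraph.fromRel_adj]; decide
  have hle : Nat.card (cyc4 →g SimpleGraph.completeMultipartiteGraph V) ≤ Nat.card Q := by
    refine Nat.card_le_card_of_injective
      (fun f => ⟨(f 0, f 1, f 2, f 3), f.map_adj hadj.1, f.map_adj hadj.2.1,
        f.map_adj hadj.2.2.1, f.map_adj hadj.2.2.2⟩) fun f g h => ?_
    simp only [Q, Subtype.mk.injEq, Prod.mk.injEq] at h
    refine DFunLike.ext _ _ fun v => ?_
    fin_cases v
    exacts [h.1, h.2.1, h.2.2.1, h.2.2.2]
  have hsum : ∀ g : ι → ι → ι → ι → ℝ, ∑ q : W × W × W × W, g q.1.1 q.2.1.1 q.2.2.1.1 q.2.2.2.1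
      = ∑ i, ∑ j, ∑ k, ∑ l, (Fintype.card (V i) * Fintype.card (V j) * Fintype.card (V k)
          * Fintype.card (V l) : ℝ) * g i j k l := by
    intro g
    simp only [Fintype.sum_prod_type, W, Fintype.sum_sigma, sum_const, card_univ, nsmul_eq_mul,
      mul_sum]
    simp only [mul_assoc]
  have hQ : (Nat.card Q : ℝ) = c4HomDensity (fun i => (Fintype.card (V i) : ℝ)) := by
    rw [Nat.card_eq_fintype_card, Fintype.card_subtype, card_filter]
    push_cast
    rw [hsum fun i j k l => if i ≠ j ∧ j ≠ k ∧ k ≠ l ∧ l ≠ i then 1 else 0]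
    simp only [mul_ite, mul_one, mul_zero, c4HomDensity]
  exact hQ ▸ (by exact_mod_cast hle)

lemma tendsto_pow_div_choose (k : ℕ) :
    Tendsto (fun n : ℕ => ((n : ℝ) ^ k / k.factorial) / n.choose k) atTop (𝓝 1) := by
  have hz : ∀ᶠ n : ℕ in atTop, (n.choose k : ℝ) ≠ 0 :=
    eventually_atTop.2 ⟨k, fun n hn => by exact_mod_cast (Nat.choose_pos hn).ne'⟩
  exact (isEquivalent_iff_tendsto_one hz).1 (isEquivalent_choose k).symm

lemma numCopies_cyc4_multipartite_div_choose_le {r n : ℕ} (x : Fin r → ℕ) (hn : n ≠ 0) :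
    (numCopies cyc4 (multipartite x) : ℝ) / n.choose 4
      ≤ 3 * c4HomDensity (fun i => (x i : ℝ) / n)
        * (((n : ℝ) ^ 4 / (4 : ℕ).factorial) / n.choose 4) := by
  have hF : c4HomDensity (fun i => (x i : ℝ)) = n ^ 4 * c4HomDensity (fun i => (x i : ℝ) / n) := by
    rw [← c4HomDensity_const_mul]
    congr 1
    funext i
    field_simp
  have hcount := (numCopies_cyc4_le (multipartite x)).trans
    (div_le_div_of_nonneg_right (card_hom_cyc4_completeMultipartiteGraph_le fun i => Fin (x i))
      (by norm_num))
  simp only [Fintype.card_fin, hF] at hcount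
  calc (numCopies cyc4 (multipartite x) : ℝ) / n.choose 4
      ≤ (n ^ 4 * c4HomDensity (fun i => (x i : ℝ) / n) / 8) / n.choose 4 :=
        div_le_div_of_nonneg_right hcount (Nat.cast_nonneg _)
    _ = _ := by simp only [Nat.factorial]; push_cast; ring

theorem stability_complete_multipartite_general {r : ℕ} (ε : ℝ) (hε : 0 < ε) :
    ∃ δ : ℝ, 0 < δ ∧ ∃ N : ℕ, ∀ n : ℕ, N ≤ n → ∀ x : Fin r → ℕ, (∑ i, x i) = n →
      3 * ((r : ℝ) - 1) * ((r : ℝ) ^ 2 - 3 * r + 3) / (r : ℝ) ^ 3 - δ <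
        (numCopies cyc4 (multipartite x) : ℝ) / (n.choose 4 : ℝ) →
      ∀ i : Fin r,
        (1 - ε) * n / r ≤ (x i : ℝ) ∧ (x i : ℝ) ≤ (1 + ε) * n / r := by
  obtain ⟨δ, hδ, hstab⟩ := exists_forall_mem_Ioo_of_lt_c4HomDensity (ι := Fin r) hε
  set φ := c4HomDensity (simplexCenter (Fin r))
  obtain ⟨N, hN⟩ := eventually_atTop.1
    (((tendsto_pow_div_choose 4).const_mul (3 * (φ - δ))).eventually
      (gt_mem_nhds (show 3 * (φ - δ) * 1 < 3 * φ - δ by linarith)))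
  refine ⟨δ, hδ, max N 1, fun n hn x hx hdens i => ?_⟩
  have hn0 : n ≠ 0 := by omega
  set a : Fin r → ℝ := fun t => (x t : ℝ) / n
  have ha : a ∈ stdSimplex ℝ (Fin r) :=
    ⟨fun t => by positivity, by rw [← sum_div, ← Nat.cast_sum, hx, div_self (by positivity)]⟩
  have hopt : 3 * ((r : ℝ) - 1) * ((r : ℝ) ^ 2 - 3 * r + 3) / (r : ℝ) ^ 3 = 3 * φ := by
    have : Nonempty (Fin r) := ⟨i⟩
    simp only [φ, c4HomDensity_simplexCenter, Fintype.card_fin]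
    ring
  set ρ := ((n : ℝ) ^ 4 / (4 : ℕ).factorial) / n.choose 4
  have hupper : _ ≤ 3 * c4HomDensity a * ρ := numCopies_cyc4_multipartite_div_choose_le x hn0
  have hρ : 3 * (φ - δ) * ρ < 3 * φ - δ := hN n (le_of_max_le_left hn)
  have hgap : φ - δ < c4HomDensity a :=
    lt_of_mul_lt_mul_right (show (φ - δ) * ρ < c4HomDensity a * ρ by linarith) (by positivity)
  obtain ⟨hlow, hhigh⟩ := hstab a ha hgap i
  rw [Fintype.card_fin] at hlow hhigh
  have hxi : (x i : ℝ) = a i * n := (div_mul_cancel₀ _ (Nat.cast_ne_zero.2 hn0)).symm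
  rw [hxi, mul_div_right_comm, mul_div_right_comm (1 + ε)]
  exact ⟨by gcongr, by gcongr⟩

/-- Stability lemma for almost optimal complete `r`-partite graphs: if the
`C₄`-density of a complete `r`-partite graph on `n` vertices is within `δ` of
the optimum `3(r-1)(r²-3r+3)/r³`, then all parts have size between
`(1-ε)n/r` and `(1+ε)n/r`. -/
theorem stability_complete_multipartite {r : ℕ} (hr : 3 ≤ r) (ε : ℝ) (hε : 0 < ε) :
    ∃ δ : ℝ, 0 < δ ∧ ∃ N : ℕ, ∀ n : ℕ, N ≤ n → ∀ x : Fin r → ℕ, (∑ i, x i) = n →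
      3 * ((r : ℝ) - 1) * ((r : ℝ) ^ 2 - 3 * r + 3) / (r : ℝ) ^ 3 - δ <
        (numCopies cyc4 (multipartite x) : ℝ) / (n.choose 4 : ℝ) →
      ∀ i : Fin r,
        (1 - ε) * n / r ≤ (x i : ℝ) ∧ (x i : ℝ) ≤ (1 + ε) * n / r :=
  stability_complete_multipartite_general ε hε
end
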